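/- arXiv:1205.2041 — 7 statements merged into one kernel-verified Lean document; each statement's English description precedes it below -/
import Mathlib

section
/- For every odd n ≥ 3, the polynomial identity X·f_n(X) = ψ^{(n+1)/2}(X) − ψ^{(n−1)/2}(X) holds in ℚ[X]. -/
noncomputable section

open Polynomial

/-- `ψ^i(X) := Σ_{j=1}^{i} (C(i,j)·C(i+j−1,j)/C(2j−1,j))·X^j ∈ ℚ[X]`; `ψ^0 = 0`. -/
def psiPoly (i : ℕ) : ℚ[X] :=
  ∑ j ∈ Finset.Icc 1 i,
    C (((i.choose j : ℚ) * ((i + j - 1).choose j : ℚ)) / ((2 * j - 1).choose j : ℚ)) * X ^ j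

/-- For odd `n ≥ 3`,
`f_n(X) := n + Σ_{j=1}^{(n−3)/2} (n·(n²−1²)·(n²−3²)⋯(n²−(2j−1)²)/(2^{2j}·(2j+1)!))·X^j
  + X^{(n−1)/2} ∈ ℚ[X]`. -/
def fPoly (n : ℕ) : ℚ[X] :=
  C (n : ℚ) +
    ∑ j ∈ Finset.Icc 1 ((n - 3) / 2),
      C (((n : ℚ) * ∏ i ∈ Finset.Icc 1 j, ((n : ℚ) ^ 2 - (2 * (i : ℚ) - 1) ^ 2)) /
          (2 ^ (2 * j) * ((2 * j + 1).factorial : ℚ))) * X ^ j +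
    X ^ ((n - 1) / 2)

/-- `(X+2)/2 ∈ ℚ[X]`. -/
def halfXAddTwo : ℚ[X] := C (1 / 2 : ℚ) * (X + 2)

/-!
With `n = 2m + 1`, both coefficient families are products of consecutive integers over
factorials. The coefficient of `X^k` in `ψ^a` is `2 ∏_{i<k} (a² - i²) / (2k)!`, and
`∏_{i=1}^{j} (n² - (2i-1)²) = 4^j P` with `P = (m+1-j)⋯(m+j)`. Since
`∏_{i≤j} ((m+1)² - i²) = (m+1)(m+1+j) P` and `∏_{i≤j} (m² - i²) = m(m-j) P`, the difference of the
coefficients of `X^{j+1}` in `ψ^{m+1}` and `ψ^m` is `2 (2m+1)(j+1) P / (2j+2)!`, the coefficient of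
`X^j` in `f_n`. At `j = m` this gives `1 - 0`, the leading coefficient of `f_n`.
-/

open Finset

def psiCoeff (i j : ℕ) : ℚ :=
  (i.choose j : ℚ) * ((i + j - 1).choose j : ℚ) / ((2 * j - 1).choose j : ℚ)

def fCoeff (n j : ℕ) : ℚ :=
  ((n : ℚ) * ∏ i ∈ Icc 1 j, ((n : ℚ) ^ 2 - (2 * (i : ℚ) - 1) ^ 2)) /
    (2 ^ (2 * j) * ((2 * j + 1).factorial : ℚ))

theorem sum_Icc_one_eq_sum_range {M : Type*} [AddCommMonoid M] (f : ℕ → M) (b : ℕ) :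
    ∑ i ∈ Icc 1 b, f i = ∑ i ∈ range b, f (i + 1) := by
  rw [← Ico_add_one_right_eq_Icc, sum_Ico_eq_sum_range, Nat.add_sub_cancel]
  simp only [add_comm]

section CommRing

variable {R : Type*} [CommRing R]

theorem four_pow_mul_prod_range_sq_sub_sq (x : R) (j : ℕ) :
    4 ^ j * ∏ i ∈ range (j + 1), (x ^ 2 - (i : R) ^ 2) =
      x * (x - j) * ∏ i ∈ Icc 1 j, ((2 * x + 1) ^ 2 - (2 * (i : R) - 1) ^ 2) := by
  induction j with
  | zero => simp [sq]
  | succ j ih =>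
    rw [prod_range_succ, prod_Icc_succ_top (by omega), pow_succ]
    push_cast
    linear_combination (4 * (x - j - 1) * (x + j + 1)) * ih

theorem four_pow_mul_prod_range_add_one_sq_sub_sq (x : R) (j : ℕ) :
    4 ^ j * ∏ i ∈ range (j + 1), ((x + 1) ^ 2 - (i : R) ^ 2) =
      (x + 1) * (x + 1 + j) * ∏ i ∈ Icc 1 j, ((2 * x + 1) ^ 2 - (2 * (i : R) - 1) ^ 2) := by
  induction j with
  | zero => simp [sq]
  | succ j ih =>
    rw [prod_range_succ, prod_Icc_succ_top (by omega), pow_succ]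
    push_cast
    linear_combination (4 * (x - j) * (x + j + 2)) * ih

end CommRing

theorem cast_choose_mul_cast_choose_add_sub_one {K : Type*} [Field K] [CharZero K] (a j : ℕ) :
    (a.choose j : K) * ((a + j - 1).choose j : K) =
      (∏ i ∈ range j, ((a : K) ^ 2 - (i : K) ^ 2)) / (j.factorial : K) ^ 2 := by
  have hdesc : (a.choose j : K) = (∏ i ∈ range j, ((a : K) - i)) / j.factorial := by
    rw [Nat.cast_choose_eq_descPochhammer_div, descPochhammer_eval_eq_prod_range]
  have hasc : (j.factorial : K) * ((a + j - 1).choose j : K) = ∏ i ∈ range j, ((a : K) + i) := by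
    exact_mod_cast (Nat.ascFactorial_eq_factorial_mul_choose' a j).symm.trans
      (Nat.ascFactorial_eq_prod_range a j)
  have hfact : (j.factorial : K) ≠ 0 := Nat.cast_ne_zero.mpr j.factorial_ne_zero
  rw [hdesc, eq_div_iff (pow_ne_zero 2 hfact)]
  calc _ = (∏ i ∈ range j, ((a : K) - i)) * (j.factorial * ((a + j - 1).choose j : K)) := by
        field_simp
    _ = _ := by
        rw [hasc, ← prod_mul_distrib]
        exact prod_congr rfl fun i _ => by ring

theorem psiCoeff_succ (a k : ℕ) :
    psiCoeff a (k + 1) = 2 * (∏ i ∈ range (k + 1), ((a : ℚ) ^ 2 - (i : ℚ) ^ 2)) /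
      ((2 * k + 2).factorial : ℚ) := by
  rw [psiCoeff, cast_choose_mul_cast_choose_add_sub_one,
    show 2 * (k + 1) - 1 = 2 * k + 1 by omega, Nat.cast_choose ℚ (by omega),
    show 2 * k + 1 - (k + 1) = k by omega, show 2 * k + 2 = (2 * k + 1) + 1 by omega,
    Nat.factorial_succ (2 * k + 1), Nat.factorial_succ k]
  push_cast
  field_simp
  ring

theorem psiCoeff_succ_self (a : ℕ) : psiCoeff (a + 1) (a + 1) = 1 := by
  have : ((a + 1 + (a + 1) - 1).choose (a + 1) : ℚ) ≠ 0 := by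
    exact_mod_cast (Nat.choose_pos (by omega)).ne'
  rw [psiCoeff, Nat.choose_self, Nat.cast_one, one_mul, two_mul, div_self this]

theorem psiCoeff_of_lt {a j : ℕ} (h : a < j) : psiCoeff a j = 0 := by
  simp [psiCoeff, Nat.choose_eq_zero_of_lt h]

theorem fCoeff_two_mul_add_one (m j : ℕ) :
    fCoeff (2 * m + 1) j = psiCoeff (m + 1) (j + 1) - psiCoeff m (j + 1) := by
  have key : 4 ^ j * (∏ i ∈ range (j + 1), (((m : ℚ) + 1) ^ 2 - (i : ℚ) ^ 2) -
      ∏ i ∈ range (j + 1), ((m : ℚ) ^ 2 - (i : ℚ) ^ 2)) =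
      (2 * m + 1) * (j + 1) * ∏ i ∈ Icc 1 j, ((2 * (m : ℚ) + 1) ^ 2 - (2 * (i : ℚ) - 1) ^ 2) := by
    linear_combination four_pow_mul_prod_range_add_one_sq_sub_sq (m : ℚ) j -
      four_pow_mul_prod_range_sq_sub_sq (m : ℚ) j
  rw [fCoeff, psiCoeff_succ, psiCoeff_succ, show 2 * j + 2 = (2 * j + 1) + 1 by omega,
    Nat.factorial_succ (2 * j + 1), pow_mul]
  push_cast
  field_simp
  linear_combination (-2) * key

theorem psiPoly_eq_sum_range (a : ℕ) :
    psiPoly a = ∑ k ∈ range a, C (psiCoeff a (k + 1)) * X ^ (k + 1) :=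
  sum_Icc_one_eq_sum_range _ a

theorem psiPoly_succ_sub_psiPoly (m : ℕ) :
    psiPoly (m + 1) - psiPoly m =
      ∑ k ∈ range (m + 1), C (psiCoeff (m + 1) (k + 1) - psiCoeff m (k + 1)) * X ^ (k + 1) := by
  have hpsi : psiPoly m = ∑ k ∈ range (m + 1), C (psiCoeff m (k + 1)) * X ^ (k + 1) := by
    rw [sum_range_succ, psiCoeff_of_lt (Nat.lt_succ_self m), map_zero, zero_mul, add_zero,
      psiPoly_eq_sum_range]
  rw [hpsi, psiPoly_eq_sum_range, ← sum_sub_distrib]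
  simp only [C_sub, sub_mul]

theorem fCoeff_zero (n : ℕ) : fCoeff n 0 = n := by
  simp [fCoeff]

theorem fCoeff_two_mul_add_one_self (m : ℕ) : fCoeff (2 * m + 1) m = 1 := by
  cases m with
  | zero => simp [fCoeff_zero]
  | succ k => rw [fCoeff_two_mul_add_one, psiCoeff_succ_self, psiCoeff_of_lt (by omega), sub_zero]

theorem fPoly_two_mul_add_one {m : ℕ} (hm : m ≠ 0) :
    fPoly (2 * m + 1) = ∑ j ∈ range (m + 1), C (fCoeff (2 * m + 1) j) * X ^ j := by
  obtain ⟨k, rfl⟩ := Nat.exists_eq_succ_of_ne_zero hm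
  have hf : fPoly (2 * (k + 1) + 1) = C ((2 * (k + 1) + 1 : ℕ) : ℚ) +
      ∑ j ∈ Icc 1 k, C (fCoeff (2 * (k + 1) + 1) j) * X ^ j + X ^ (k + 1) := by
    rw [fPoly, show (2 * (k + 1) + 1 - 3) / 2 = k by omega,
      show (2 * (k + 1) + 1 - 1) / 2 = k + 1 by omega]
    rfl
  rw [hf, sum_range_succ, sum_range_succ', sum_Icc_one_eq_sum_range, fCoeff_two_mul_add_one_self,
    fCoeff_zero, pow_zero, mul_one, map_one, one_mul]
  ring

/-- For every odd `n ≥ 3`,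
`X·f_n(X) = ψ^{(n+1)/2}(X) − ψ^{(n−1)/2}(X)` in `ℚ[X]`. -/
theorem X_mul_fPoly_eq_psiPoly_sub (n : ℕ) (hodd : Odd n) (hn : 3 ≤ n) :
    X * fPoly n = psiPoly ((n + 1) / 2) - psiPoly ((n - 1) / 2) := by
  obtain ⟨m, rfl⟩ := hodd
  rw [show (2 * m + 1 + 1) / 2 = m + 1 by omega, show (2 * m + 1 - 1) / 2 = m by omega,
    fPoly_two_mul_add_one (by omega), psiPoly_succ_sub_psiPoly, mul_sum]
  refine sum_congr rfl fun j _ => ?_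
  rw [fCoeff_two_mul_add_one, pow_succ]
  ring
end
end

section
/- For every integer i ≥ 0, the polynomial identity ψ^i(X) = 2·T_i((X+2)/2) − 2 holds in ℚ[X], where T_i((X+2)/2) denotes the composition of the i-th Chebyshev polynomial of the first kind with the polynomial (X+2)/2. -/
noncomputable section

open Polynomial

/-! ### Auxiliary lemmas -/

lemma castA (n k : ℕ) :
    (((n+1).choose k : ℚ)) * ((n:ℚ) + 1 - k) = (n.choose k : ℚ) * ((n:ℚ) + 1) := by
  rcases le_or_gt k (n+1) with h | h
  · have := Nat.choose_mul_succ_eq n k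
    have hc : ((n + 1 - k : ℕ) : ℚ) = (n:ℚ) + 1 - k := by
      push_cast [Nat.cast_sub h]; ring
    calc (((n+1).choose k : ℚ)) * ((n:ℚ) + 1 - k)
        = (((n+1).choose k : ℚ)) * ((n + 1 - k : ℕ) : ℚ) := by rw [hc]
      _ = ((n.choose k * (n+1) : ℕ) : ℚ) := by rw [this]; push_cast; ring
      _ = (n.choose k : ℚ) * ((n:ℚ) + 1) := by push_cast; ring
  · rw [Nat.choose_eq_zero_of_lt h, Nat.choose_eq_zero_of_lt (by omega)]
    simp

lemma castB (n k : ℕ) :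
    ((n.choose (k+1) : ℚ)) * ((k:ℚ) + 1) = (n.choose k : ℚ) * ((n:ℚ) - k) := by
  rcases le_or_gt k n with h | h
  · have := Nat.choose_succ_right_eq n k
    calc ((n.choose (k+1) : ℚ)) * ((k:ℚ) + 1)
        = ((n.choose (k+1) * (k+1) : ℕ) : ℚ) := by push_cast; ring
      _ = ((n.choose k * (n - k) : ℕ) : ℚ) := by rw [this]
      _ = (n.choose k : ℚ) * ((n:ℚ) - k) := by push_cast [Nat.cast_sub h]; ring
  · rw [Nat.choose_eq_zero_of_lt h, Nat.choose_eq_zero_of_lt (by omega)]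
    simp

lemma hDrel (k : ℕ) :
    ((k:ℚ) + 2) * ((2*k+3).choose (k+2) : ℚ)
      = 2 * (2*(k:ℚ) + 3) * ((2*k+1).choose (k+1) : ℚ) := by
  have h1 : (2*k+3) * (2*k+2).choose (k+1) = (2*k+3).choose (k+2) * (k+2) :=
    Nat.add_one_mul_choose_eq (2*k+2) (k+1)
  have h2 : (2*k+2) * (2*k+1).choose k = (2*k+2).choose (k+1) * (k+1) :=
    Nat.add_one_mul_choose_eq (2*k+1) k
  have hsymm : (2*k+1).choose k = (2*k+1).choose (k+1) := by
    rw [← Nat.choose_symm (by omega : k+1 ≤ 2*k+1), show 2*k+1-(k+1) = k by omega]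
  rw [hsymm] at h2
  have hk1 : ((k:ℚ) + 1) ≠ 0 := by positivity
  apply mul_left_cancel₀ hk1
  have h1' : (2*(k:ℚ)+3) * ((2*k+2).choose (k+1) : ℚ)
      = ((2*k+3).choose (k+2) : ℚ) * ((k:ℚ)+2) := by
    exact_mod_cast congrArg (Nat.cast : ℕ → ℚ) h1
  have h2' : (2*(k:ℚ)+2) * ((2*k+1).choose (k+1) : ℚ)
      = ((2*k+2).choose (k+1) : ℚ) * ((k:ℚ)+1) := by
    exact_mod_cast congrArg (Nat.cast : ℕ → ℚ) h2
  linear_combination (-(k:ℚ)-1) * h1' + (-(2*(k:ℚ)+3)) * h2'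

lemma keyrec (i k : ℕ) :
    ((i+2).choose (k+2) : ℚ) * ((i+k+3).choose (k+2) : ℚ) / ((2*(k+2)-1).choose (k+2) : ℚ)
      = ((i+1).choose (k+1) : ℚ) * ((i+k+1).choose (k+1) : ℚ) / ((2*(k+1)-1).choose (k+1) : ℚ)
        + 2 * (((i+1).choose (k+2) : ℚ) * ((i+k+2).choose (k+2) : ℚ) / ((2*(k+2)-1).choose (k+2) : ℚ))
        - ((i.choose (k+2) : ℚ) * ((i+k+1).choose (k+2) : ℚ) / ((2*(k+2)-1).choose (k+2) : ℚ)) := by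
  rw [show 2*(k+2)-1 = 2*k+3 by omega, show 2*(k+1)-1 = 2*k+1 by omega]
  set x : ℚ := (i : ℚ) with hx
  set K : ℚ := (k : ℚ) with hK
  set A0 : ℚ := (i.choose (k+2) : ℚ) with hA0
  set A1 : ℚ := ((i+1).choose (k+2) : ℚ) with hA1
  set A2 : ℚ := ((i+2).choose (k+2) : ℚ) with hA2
  set B0 : ℚ := ((i+k+1).choose (k+2) : ℚ) with hB0
  set B1 : ℚ := ((i+k+2).choose (k+2) : ℚ) with hB1
  set B2 : ℚ := ((i+k+3).choose (k+2) : ℚ) with hB2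
  set u : ℚ := ((i+1).choose (k+1) : ℚ) with hu
  set w : ℚ := ((i+k+1).choose (k+1) : ℚ) with hw
  set Dj : ℚ := ((2*k+3).choose (k+2) : ℚ) with hDj
  set Dj' : ℚ := ((2*k+1).choose (k+1) : ℚ) with hDj'
  -- relations
  have r2 : A1 * (x + 1 - (K+2)) = A0 * (x + 1) := by
    have := castA i (k+2); rw [← hA1, ← hA0] at *; push_cast at this ⊢; linarith [this]
  have r3 : B2 * (x + 1) = B1 * (x + K + 3) := by
    have := castA (i+k+2) (k+2)
    rw [show i+k+2+1 = i+k+3 from rfl] at this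
    push_cast at this ⊢; linear_combination this
  have r5 : A1 * (K + 2) = u * (x + 2 - (K+2)) := by
    have := castB (i+1) (k+1); push_cast at this ⊢; linear_combination this
  have r6 : B0 * (K + 2) = w * x := by
    have := castB (i+k+1) (k+1); push_cast at this ⊢; linear_combination this
  have r7 : A2 = A1 + u := by
    rw [hA2, hA1, hu, show i+2 = (i+1)+1 from rfl, Nat.choose_succ_succ' ]
    push_cast; ring
  have r8 : B1 = B0 + w := by
    rw [hB1, hB0, hw, show i+k+2 = (i+k+1)+1 from rfl, Nat.choose_succ_succ']
    push_cast; ring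
  have hD := hDrel k
  rw [← hDj, ← hDj', ← hK] at hD
  have hDjne : Dj ≠ 0 := by
    rw [hDj]; exact_mod_cast (Nat.choose_pos (by omega : k+2 ≤ 2*k+3)).ne'
  have hDj'ne : Dj' ≠ 0 := by
    rw [hDj']; exact_mod_cast (Nat.choose_pos (by omega : k+1 ≤ 2*k+1)).ne'
  set J : ℚ := K + 2 with hJ
  have hE : J*(x+1)*(J*A2*B2 + J*A0*B0) = J*(x+1)*(2*(2*J-1)*u*w + 2*J*A1*B1) := by
    have r2' : A1*(x+1-J) = A0*(x+1) := by rw [hJ]; linear_combination r2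
    have r5' : A1*J = u*(x+2-J) := by rw [hJ]; linear_combination r5
    have r6' : B0*J = w*x := by rw [hJ]; linear_combination r6
    have r3' : B2*(x+1) = B1*(x+J+1) := by rw [hJ]; linear_combination r3
    linear_combination (J^2*A2) * r3'
      + (J^2*(x+J+1)*B1) * r7
      + (J^2*(x+J+1)*(A1+u) - 2*(x+1)*J^2*A1) * r8
      + ((x+J+1)*(J*B0 + J*w) + (x+1-J)*J*B0 - 2*(x+1)*(J*B0 + J*w)) * r5'
      + ((x+J+1)*(u*(x+2-J) + J*u) + (x+1-J)*u*(x+2-J) - 2*(x+1)*u*(x+2-J)) * r6'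
      + (-(J^2)*B0) * r2'
  have hJpos : (0:ℚ) < J := by rw [hJ, hK]; positivity
  have hxpos : (0:ℚ) < x + 1 := by rw [hx]; positivity
  have hJx : J*(x+1) ≠ 0 := by positivity
  have G2 : J*A2*B2 + J*A0*B0 = 2*(2*J-1)*u*w + 2*J*A1*B1 := mul_left_cancel₀ hJx hE
  have hDgood : J * Dj = 2*(2*J-1) * Dj' := by rw [hJ]; linear_combination hD
  have hfrac : (A2*B2 - 2*(A1*B1) + A0*B0) * Dj' = u*w*Dj := by
    apply mul_left_cancel₀ hJpos.ne'
    linear_combination Dj' * G2 - u*w*hDgood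
  have hmain : u*w/Dj' = (A2*B2 - 2*(A1*B1) + A0*B0)/Dj := by
    rw [div_eq_div_iff hDj'ne hDjne]
    linear_combination -hfrac
  rw [hmain]; ring

lemma coeff_psiPoly (i n : ℕ) : (psiPoly i).coeff n =
    if n ∈ Finset.Icc 1 i
    then ((i.choose n : ℚ) * ((i + n - 1).choose n : ℚ)) / ((2 * n - 1).choose n : ℚ)
    else 0 := by
  rw [psiPoly, finset_sum_coeff]
  simp only [coeff_C_mul, coeff_X_pow, mul_ite, mul_one, mul_zero]
  rw [Finset.sum_ite_eq (Finset.Icc 1 i) n]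

lemma coeff_psiPoly' (i n : ℕ) (hn : 1 ≤ n) : (psiPoly i).coeff n =
    ((i.choose n : ℚ) * ((i + n - 1).choose n : ℚ)) / ((2 * n - 1).choose n : ℚ) := by
  rw [coeff_psiPoly]
  by_cases h : n ∈ Finset.Icc 1 i
  · rw [if_pos h]
  · rw [if_neg h]
    have hni : i < n := by simp [Finset.mem_Icc, hn] at h; omega
    rw [Nat.choose_eq_zero_of_lt hni]
    simp

lemma coeff_psiPoly0 (i : ℕ) : (psiPoly i).coeff 0 = 0 := by
  rw [coeff_psiPoly, if_neg (by simp)]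

lemma psiRec (i : ℕ) :
    psiPoly (i+2) + psiPoly i = (X + 2) * psiPoly (i+1) + 2 * X := by
  have hX : ∀ (p : ℚ[X]) (n : ℕ), ((X + 2) * p).coeff (n+1) = p.coeff n + 2 * p.coeff (n+1) := by
    intro p n
    rw [add_mul, coeff_add, coeff_X_mul]
    simp [coeff_ofNat_mul]
  apply Polynomial.ext
  intro n
  match n with
  | 0 =>
    rw [coeff_add, coeff_add, coeff_psiPoly0, coeff_psiPoly0, mul_coeff_zero]
    simp [coeff_psiPoly0]
  | 1 =>
    have h1 := hX (psiPoly (i+1)) 0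
    norm_num at h1
    rw [coeff_add, coeff_add, coeff_psiPoly' _ 1 le_rfl, coeff_psiPoly' _ 1 le_rfl, h1,
      coeff_psiPoly0, coeff_psiPoly' _ 1 le_rfl]
    simp only [Nat.choose_one_right]
    norm_num
    ring
  | (m+2) =>
    have h1 := hX (psiPoly (i+1)) (m+1)
    simp only [show m+1+1 = m+2 by rfl] at h1
    rw [coeff_add, coeff_add, coeff_psiPoly' _ _ (by omega), coeff_psiPoly' _ _ (by omega), h1,
      coeff_psiPoly' _ _ (by omega), coeff_psiPoly' _ _ (by omega)]
    have e1 : i + 2 + (m + 2) - 1 = i + m + 3 := by omega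
    have e2 : i + 1 + (m + 1) - 1 = i + m + 1 := by omega
    have e3 : i + 1 + (m + 2) - 1 = i + m + 2 := by omega
    have e4 : i + (m + 2) - 1 = i + m + 1 := by omega
    rw [e1, e2, e3, e4]
    have hx : (X : ℚ[X]).coeff (m+2) = 0 := by
      rw [coeff_X]; simp
    have h2x : ((2 : ℚ[X]) * X).coeff (m+2) = 0 := by
      simp [coeff_ofNat_mul, hx]
    rw [h2x, add_zero]
    linear_combination keyrec i m

lemma two_halfXAddTwo : (2 : ℚ[X]) * halfXAddTwo = X + 2 := by
  rw [halfXAddTwo, show (2 : ℚ[X]) = C 2 from (map_ofNat C 2).symm, ← mul_assoc, ← C_mul]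
  norm_num

/-- For every `i ≥ 0`, `ψ^i(X) = 2·T_i((X+2)/2) − 2` in `ℚ[X]`, where
`T_i` is the `i`-th Chebyshev polynomial of the first kind. -/
theorem psiPoly_eq_chebyshev (i : ℕ) :
    psiPoly i = 2 * (Polynomial.Chebyshev.T ℚ (i : ℤ)).comp halfXAddTwo - 2 := by
  induction i using Nat.twoStepInduction with
  | zero =>
    rw [show ((0:ℕ):ℤ) = 0 by rfl, Polynomial.Chebyshev.T_zero]
    simp [psiPoly]
  | one =>
    rw [show ((1:ℕ):ℤ) = 1 by rfl, Polynomial.Chebyshev.T_one, X_comp]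
    have : psiPoly 1 = X := by
      rw [psiPoly]
      simp
    rw [this]
    linear_combination -two_halfXAddTwo
  | more n ih0 ih1 =>
    have hcast : ((n + 2 : ℕ) : ℤ) = (n : ℤ) + 2 := by push_cast; ring
    rw [hcast, Polynomial.Chebyshev.T_add_two]
    have hcast1 : ((n + 1 : ℕ) : ℤ) = (n : ℤ) + 1 := by push_cast; ring
    rw [hcast1] at ih1
    rw [sub_comp, mul_comp, mul_comp, X_comp]
    have h2c : ((2 : ℚ[X]) : ℚ[X]).comp halfXAddTwo = 2 := by
      simp
    rw [h2c]
    have hrec := psiRec n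
    linear_combination hrec + (X + 2) * ih1 - ih0
      - (2 * ((Polynomial.Chebyshev.T ℚ ((n:ℤ) + 1)).comp halfXAddTwo)) * two_halfXAddTwo
end
end

section
/- For every odd n ≥ 3, the polynomial identity X·(f_n(X))² = 2·T_n((X+2)/2) − 2 holds in ℚ[X]; that is, f_n(X) is a square root of the polynomial (2·T_n((X+2)/2) − 2)/X, where T_n((X+2)/2) denotes the composition of the n-th Chebyshev polynomial of the first kind with the polynomial (X+2)/2. -/
noncomputable section

open Polynomial

/-! Substitute `X = Y - 2`; then `2 T_n(Y/2) = C_n(Y)`, the Dickson polynomial `Chebyshev.C`.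
Writing `Y = z + z⁻¹`, we have `C_n(Y) - 2 = (z^(n/2) - z^(-n/2))²` and
`Y - 2 = (z^(1/2) - z^(-1/2))²`, so for `n = 2m + 3` the quotient is the square of
`z^(-m-1) + ⋯ + z^(m+1) = S_{m+1}(Y) + S_m(Y)`. As a polynomial identity this reduces to
`S_m² + S_{m+1}² - Y S_m S_{m+1} = 1`. Finally `S_m(X + 2)` has coefficients
`choose (m + 1 + j) (2j + 1)`, and the `j`-th coefficient of `f_n` equals
`n (m + 1 + j)! / ((m + 1 - j)! (2j + 1)!)`, which is
`choose (m + 2 + j) (2j + 1) + choose (m + 1 + j) (2j + 1)`. -/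

open Finset

theorem Nat.choose_add_two_add_two (N k : ℕ) :
    (N + 2).choose (k + 2) + N.choose (k + 2) = N.choose k + 2 * (N + 1).choose (k + 2) := by
  rw [Nat.choose_succ_succ' (N + 1), Nat.choose_succ_succ' N k, Nat.choose_succ_succ' N (k + 1)]
  ring

theorem Nat.factorial_mul_choose_add_choose {m j : ℕ} (hj : j ≤ m) :
    (2 * j + 1).factorial * ((m + 1 + j).choose (2 * j + 1) + (m + j).choose (2 * j + 1)) =
      (2 * m + 1) * (m + j).descFactorial (2 * j) := by
  rw [mul_add, ← Nat.descFactorial_eq_factorial_mul_choose,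
    ← Nat.descFactorial_eq_factorial_mul_choose, show m + 1 + j = m + j + 1 by ring,
    Nat.succ_descFactorial_succ, Nat.descFactorial_succ, ← add_mul]
  congr 1
  omega

namespace Polynomial.Chebyshev

variable (R : Type*) [CommRing R]

theorem X_sub_two_mul_S_add_S_sq (m : ℤ) :
    (X - 2) * (S R (m + 1) + S R m) ^ 2 = C R (2 * m + 3) - 2 := by
  have hC : C R (2 * m + 3) = C R (m + 2) * C R (m + 1) - X := by
    rw [C_mul_C, show m + 2 - (m + 1) = 1 by ring, C_one]; ring_nf
  have hC₁ := C_eq_S_sub_X_mul_S R (m + 1)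
  have hC₂ := C_eq_S_sub_X_mul_S R (m + 2)
  have hS := S_add_two R m
  have hsq := S_sq_add_S_sq R m
  simp only [add_sub_cancel_right, show m + 2 - 1 = m + 1 by ring] at hC₁ hC₂
  rw [hC, hC₂, hC₁, hS]
  linear_combination (-(X + 2)) * hsq

theorem X_mul_S_add_S_comp_X_add_two_sq (m : ℤ) :
    X * ((S R (m + 1) + S R m).comp (X + 2)) ^ 2 = (C R (2 * m + 3)).comp (X + 2) - 2 := by
  have h := congrArg (fun p => p.comp (X + 2 : R[X])) (X_sub_two_mul_S_add_S_sq R m)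
  simpa only [mul_comp, sub_comp, pow_comp, X_comp, ofNat_comp, Nat.cast_ofNat,
    add_sub_cancel_right] using h

theorem coeff_S_comp_X_add_two (m j : ℕ) :
    ((S R m).comp (X + 2)).coeff j = ((m + 1 + j).choose (2 * j + 1) : R) := by
  induction m using Nat.twoStepInduction generalizing j with
  | zero =>
    rcases j with _ | j
    · simp
    · rw [Nat.choose_eq_zero_of_lt (by omega)]; simp [coeff_one]
  | one =>
    rcases j with _ | _ | j
    · simp
    · simp
    · rw [Nat.choose_eq_zero_of_lt (by omega)]; simp [coeff_X]
  | more m ih₀ ih₁ =>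
    have hrec : (S R (m + 2 : ℕ)).comp (X + 2) =
        X * (S R (m + 1 : ℕ)).comp (X + 2) + 2 * (S R (m + 1 : ℕ)).comp (X + 2) -
          (S R m).comp (X + 2) := by
      push_cast
      rw [S_add_two, sub_comp, mul_comp, X_comp]
      ring
    rw [hrec, coeff_sub, coeff_add, coeff_ofNat_mul]
    rcases j with _ | j
    · simp only [coeff_X_mul_zero, ih₀, ih₁, mul_zero, add_zero, zero_add,
        Nat.choose_one_right]
      push_cast; ring
    · have pascal :=
        congrArg (Nat.cast : ℕ → R) (Nat.choose_add_two_add_two (m + j + 2) (2 * j + 1))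
      simp only [coeff_X_mul, ih₀, ih₁]
      push_cast at pascal
      ring_nf at pascal ⊢
      linear_combination -pascal

theorem two_mul_T_comp (n : ℤ) (p : R[X]) : 2 * (T R n).comp p = (C R n).comp (2 * p) := by
  calc 2 * (T R n).comp p = (2 * T R n).comp p := by simp [mul_comp]
    _ = (C R n).comp (2 * p) := by
      rw [← C_comp_two_mul_X, comp_assoc, mul_comp, X_comp, ofNat_comp]
      norm_cast

end Polynomial.Chebyshev

-- `(2m + 1)² - (2i - 1)² = 4 (m + i) (m + 1 - i)`
theorem prod_Icc_sq_sub_odd_sq {R : Type*} [CommRing R] {m j : ℕ} (hj : j ≤ m) :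
    ∏ i ∈ Icc 1 j, ((2 * m + 1 : R) ^ 2 - (2 * i - 1) ^ 2) =
      4 ^ j * ((m + j).descFactorial (2 * j) : R) := by
  induction j with
  | zero => simp
  | succ j ih =>
    obtain ⟨d, rfl⟩ := Nat.exists_eq_add_of_lt hj
    rw [prod_Icc_succ_top (by omega), ih (by omega),
      show j + d + 1 + (j + 1) = (j + d + 1 + j) + 1 by ring,
      show 2 * (j + 1) = (2 * j + 1) + 1 by ring,
      Nat.succ_descFactorial_succ, Nat.descFactorial_succ,
      show j + d + 1 + j - 2 * j = d + 1 by omega]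
    push_cast
    ring

theorem fPoly_coeff_formula_eq_choose {n m j : ℕ} (hn : n = 2 * m + 1) (hj : j ≤ m) :
    ((n : ℚ) * ∏ i ∈ Icc 1 j, ((n : ℚ) ^ 2 - (2 * (i : ℚ) - 1) ^ 2)) /
        (2 ^ (2 * j) * ((2 * j + 1).factorial : ℚ)) =
      ((m + 1 + j).choose (2 * j + 1) + (m + j).choose (2 * j + 1) : ℕ) := by
  have key := congrArg (Nat.cast : ℕ → ℚ) (Nat.factorial_mul_choose_add_choose hj)
  subst hn
  push_cast at key ⊢
  rw [prod_Icc_sq_sub_odd_sq hj, pow_mul, show (2 : ℚ) ^ 2 = 4 by norm_num]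
  field_simp
  exact key.symm

theorem coeff_fPoly (k j : ℕ) :
    (fPoly (2 * k + 3)).coeff j =
      ((k + 2 + j).choose (2 * j + 1) + (k + 1 + j).choose (2 * j + 1) : ℕ) := by
  simp only [fPoly, coeff_add, coeff_C, finsetSum_coeff, coeff_C_mul_X_pow, coeff_X_pow,
    sum_ite_eq, show (2 * k + 3 - 3) / 2 = k by omega, show (2 * k + 3 - 1) / 2 = k + 1 by omega]
  obtain rfl | hj₀ := eq_or_ne j 0
  · simp
    ring
  obtain hjk | rfl | hjk : j ≤ k ∨ j = k + 1 ∨ k + 1 < j := by omega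
  · rw [if_neg hj₀, if_pos (mem_Icc.2 ⟨by omega, hjk⟩), if_neg (by omega),
      fPoly_coeff_formula_eq_choose (m := k + 1) (by ring) (by omega)]
    simp
  · rw [show k + 2 + (k + 1) = 2 * (k + 1) + 1 by ring, Nat.choose_self,
      Nat.choose_eq_zero_of_lt (n := k + 1 + (k + 1)) (by omega)]
    simp
  · rw [if_neg hj₀, if_neg (by rw [mem_Icc]; omega), if_neg (by omega),
      Nat.choose_eq_zero_of_lt (by omega), Nat.choose_eq_zero_of_lt (by omega)]
    simp

theorem fPoly_eq_S_add_S_comp (k : ℕ) :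
    fPoly (2 * k + 3) = (Chebyshev.S ℚ (k + 1) + Chebyshev.S ℚ k).comp (X + 2) := by
  ext j
  have hS := Chebyshev.coeff_S_comp_X_add_two ℚ (k + 1) j
  push_cast at hS
  rw [coeff_fPoly, add_comp, coeff_add, hS, Chebyshev.coeff_S_comp_X_add_two]
  push_cast
  rfl

theorem two_mul_halfXAddTwo : 2 * halfXAddTwo = X + 2 := by
  rw [halfXAddTwo, ← mul_assoc, ← C_ofNat, ← C_mul]
  norm_num

/-- For every odd `n ≥ 3`, `X·(f_n(X))² = 2·T_n((X+2)/2) − 2` in `ℚ[X]`;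
that is, `f_n` is a square root of the polynomial `(2·T_n((X+2)/2) − 2)/X`. -/
theorem X_mul_fPoly_sq_eq_chebyshev (n : ℕ) (hodd : Odd n) (hn : 3 ≤ n) :
    X * (fPoly n) ^ 2 = 2 * (Polynomial.Chebyshev.T ℚ (n : ℤ)).comp halfXAddTwo - 2 := by
  obtain ⟨k, rfl⟩ : ∃ k, n = 2 * k + 3 := by
    obtain ⟨k, rfl⟩ := hodd
    exact ⟨k - 1, by omega⟩
  rw [fPoly_eq_S_add_S_comp, Chebyshev.two_mul_T_comp, two_mul_halfXAddTwo]
  push_cast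
  exact Chebyshev.X_mul_S_add_S_comp_X_add_two_sq ℚ k
end
end

section
/- For every odd n = 2k+1 with k ≥ 1, the value of f_n at −2 satisfies f_n(−2) = sin(kπ/2) + cos(kπ/2); in particular f_n(−2) equals 1 if k ≡ 0 or 1 (mod 4) and equals −1 if k ≡ 2 or 3 (mod 4), so f_n(−2) = ±1. -/
noncomputable section

open Polynomial

/-!
For `X = -4 sin² θ` one has `f_{2k+1}(X) = sin((2k+1)θ) / sin θ`, so these polynomials obey the
Chebyshev-type recurrence `F_{k+2} = (X + 2) F_{k+1} - F_k` coming from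
`sin((2k+5)θ) + sin((2k+1)θ) = 2 cos 2θ · sin((2k+3)θ)`; we check it directly on the coefficients.
At `X = -2` it reads `F_{k+2}(-2) = -F_k(-2)`, and `sin(kπ/2) + cos(kπ/2)` obeys the same
recurrence with the same initial values `1, 1`.
-/

open Finset

/-- The product `(k + 1 - j) (k + 2 - j) ⋯ (k + j)` of the `2j` consecutive numbers centred at
`k + 1/2`. -/
def centredProd (k j : ℕ) : ℚ := ∏ i ∈ range (2 * j), ((k : ℚ) + 1 - j + i)

lemma centredProd_zero_right (k : ℕ) : centredProd k 0 = 1 := by simp [centredProd]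

lemma centredProd_succ_right (k m : ℕ) :
    centredProd k (m + 1) = ((k : ℚ) - m) * ((k : ℚ) + m + 1) * centredProd k m := by
  rw [centredProd, show 2 * (m + 1) = 2 * m + 1 + 1 by ring, prod_range_succ, prod_range_succ',
    centredProd]
  push_cast
  ring_nf

lemma centredProd_succ_right_eq_bottom_mul (k m : ℕ) :
    centredProd k (m + 1) = ((k : ℚ) - m) * ((k : ℚ) - m + 1) * centredProd (k + 1) m := by
  rw [centredProd, show 2 * (m + 1) = 2 * m + 1 + 1 by ring, prod_range_succ', prod_range_succ',
    centredProd]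
  push_cast
  ring_nf

lemma centredProd_add_two_succ_eq_top_mul (k m : ℕ) :
    centredProd (k + 2) (m + 1) =
      ((k : ℚ) + m + 2) * ((k : ℚ) + m + 3) * centredProd (k + 1) m := by
  rw [centredProd, show 2 * (m + 1) = 2 * m + 1 + 1 by ring, prod_range_succ, prod_range_succ,
    centredProd]
  push_cast
  ring_nf

lemma centredProd_eq_zero_of_lt {k j : ℕ} (h : k < j) : centredProd k j = 0 := by
  refine prod_eq_zero (i := j - 1 - k) (by simp only [mem_range]; omega) ?_
  rw [Nat.cast_sub (by omega), Nat.cast_sub (by omega)]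
  push_cast
  ring

lemma centredProd_self (k : ℕ) : centredProd k k = (2 * k).factorial := by
  rw [← prod_range_add_one_eq_factorial, Nat.cast_prod, centredProd]
  exact prod_congr rfl fun i _ ↦ by push_cast; ring

lemma centredProd_eq_prod_Icc (k j : ℕ) :
    centredProd k j = ∏ i ∈ Icc 1 j, (((k : ℚ) + i) * ((k : ℚ) + 1 - i)) := by
  induction j with
  | zero => simp [centredProd_zero_right]
  | succ m ih =>
    rw [centredProd_succ_right, ih, prod_Icc_succ_top (by omega)]
    push_cast
    ring

lemma factorial_two_mul_add_three (m : ℕ) :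
    ((2 * (m + 1) + 1).factorial : ℚ) = (2 * m + 3) * (2 * m + 2) * (2 * m + 1).factorial := by
  rw [show 2 * (m + 1) + 1 = 2 * m + 1 + 1 + 1 by ring, Nat.factorial_succ, Nat.factorial_succ]
  push_cast
  ring

/-- The `j`-th coefficient of `f_{2k+1}`. It vanishes for `j > k`, so sums of it may run over any
longer range. -/
def sinRatioCoeff (k j : ℕ) : ℚ :=
  (2 * k + 1) * centredProd k j / (2 * j + 1).factorial

lemma sinRatioCoeff_zero_right (k : ℕ) : sinRatioCoeff k 0 = 2 * k + 1 := by
  simp [sinRatioCoeff, centredProd_zero_right]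

lemma sinRatioCoeff_self (k : ℕ) : sinRatioCoeff k k = 1 := by
  have hfact : ((2 * k).factorial : ℚ) ≠ 0 := by positivity
  rw [sinRatioCoeff, centredProd_self, Nat.factorial_succ]
  push_cast
  field_simp

lemma sinRatioCoeff_eq_zero_of_lt {k j : ℕ} (h : k < j) : sinRatioCoeff k j = 0 := by
  simp [sinRatioCoeff, centredProd_eq_zero_of_lt h]

lemma sinRatioCoeff_add_two_zero (k : ℕ) :
    sinRatioCoeff (k + 2) 0 = 2 * sinRatioCoeff (k + 1) 0 - sinRatioCoeff k 0 := by
  simp only [sinRatioCoeff_zero_right]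
  push_cast
  ring

lemma sinRatioCoeff_add_two_succ (k m : ℕ) :
    sinRatioCoeff (k + 2) (m + 1) =
      2 * sinRatioCoeff (k + 1) (m + 1) + sinRatioCoeff (k + 1) m - sinRatioCoeff k (m + 1) := by
  have hfact : ((2 * m + 1).factorial : ℚ) ≠ 0 := by positivity
  simp only [sinRatioCoeff]
  rw [centredProd_add_two_succ_eq_top_mul, centredProd_succ_right (k + 1),
    centredProd_succ_right_eq_bottom_mul, factorial_two_mul_add_three]
  field_simp
  push_cast
  ring

def sinRatioPoly (k : ℕ) : ℚ[X] := ∑ j ∈ range (k + 1), C (sinRatioCoeff k j) * X ^ j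

lemma sinRatioPoly_eq_sum_range {k N : ℕ} (h : k ≤ N) :
    sinRatioPoly k = ∑ j ∈ range (N + 1), C (sinRatioCoeff k j) * X ^ j := by
  refine sum_subset (range_subset_range.2 (by omega)) fun j hj hjk ↦ ?_
  simp only [mem_range] at hj hjk
  rw [sinRatioCoeff_eq_zero_of_lt (by omega), C_0, zero_mul]

theorem sinRatioPoly_add_two (k : ℕ) :
    sinRatioPoly (k + 2) = (X + 2) * sinRatioPoly (k + 1) - sinRatioPoly k := by
  have hX : X * sinRatioPoly (k + 1) =
      ∑ j ∈ range (k + 2), C (sinRatioCoeff (k + 1) j) * X ^ (j + 1) := by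
    rw [sinRatioPoly, mul_sum]
    exact sum_congr rfl fun j _ ↦ by ring
  have hsucc : ∀ j ∈ range (k + 2),
      C (sinRatioCoeff (k + 2) (j + 1)) * X ^ (j + 1) + C (sinRatioCoeff k (j + 1)) * X ^ (j + 1) =
        C (sinRatioCoeff (k + 1) j) * X ^ (j + 1) +
          2 * (C (sinRatioCoeff (k + 1) (j + 1)) * X ^ (j + 1)) := fun j _ ↦ by
    rw [sinRatioCoeff_add_two_succ, C_sub, C_add, C_mul, C_ofNat]
    ring
  have hzero : C (sinRatioCoeff (k + 2) 0) + C (sinRatioCoeff k 0) =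
      2 * C (sinRatioCoeff (k + 1) 0) := by
    rw [sinRatioCoeff_add_two_zero, C_sub, C_mul, C_ofNat]
    ring
  rw [eq_sub_iff_add_eq, add_mul, hX, sinRatioPoly,
    sinRatioPoly_eq_sum_range (N := k + 2) (by omega),
    sinRatioPoly_eq_sum_range (N := k + 2) (by omega), ← sum_add_distrib, mul_sum,
    sum_range_succ', sum_range_succ' (fun j ↦ 2 * (C (sinRatioCoeff (k + 1) j) * X ^ j)),
    sum_congr rfl hsucc, sum_add_distrib]
  linear_combination hzero

lemma fPoly_coeff_eq_sinRatioCoeff (k j : ℕ) :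
    (((2 * k + 1 : ℕ) : ℚ) *
        ∏ i ∈ Icc 1 j, (((2 * k + 1 : ℕ) : ℚ) ^ 2 - (2 * (i : ℚ) - 1) ^ 2)) /
      (2 ^ (2 * j) * ((2 * j + 1).factorial : ℚ)) = sinRatioCoeff k j := by
  have hprod : ∏ i ∈ Icc 1 j, (((2 * k + 1 : ℕ) : ℚ) ^ 2 - (2 * (i : ℚ) - 1) ^ 2) =
      ∏ i ∈ Icc 1 j, (4 * (((k : ℚ) + i) * ((k : ℚ) + 1 - i))) :=
    prod_congr rfl fun i _ ↦ by push_cast; ring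
  rw [hprod, prod_mul_distrib, prod_const, Nat.card_Icc, Nat.add_sub_cancel,
    ← centredProd_eq_prod_Icc, sinRatioCoeff, pow_mul]
  norm_num
  field_simp

theorem fPoly_eq_sinRatioPoly {k : ℕ} (hk : 1 ≤ k) : fPoly (2 * k + 1) = sinRatioPoly k := by
  obtain ⟨m, rfl⟩ := Nat.exists_eq_add_of_le' hk
  rw [fPoly, show (2 * (m + 1) + 1 - 3) / 2 = m by omega,
    show (2 * (m + 1) + 1 - 1) / 2 = m + 1 by omega, sinRatioPoly, sum_range_succ, range_eq_Ico,
    sum_eq_sum_Ico_succ_bot (by omega), zero_add, Ico_add_one_right_eq_Icc,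
    sinRatioCoeff_zero_right, sinRatioCoeff_self, C_1, one_mul, pow_zero, mul_one]
  simp only [fPoly_coeff_eq_sinRatioCoeff]
  push_cast
  ring

def quarterSign (k : ℕ) : ℚ := if k % 4 < 2 then 1 else -1

lemma quarterSign_add_two (k : ℕ) : quarterSign (k + 2) = -quarterSign k := by
  unfold quarterSign
  split_ifs <;> first | omega | norm_num

theorem sinRatioPoly_eval_neg_two (k : ℕ) : (sinRatioPoly k).eval (-2) = quarterSign k := by
  induction k using Nat.twoStepInduction with
  | zero => simp [sinRatioPoly, sinRatioCoeff_zero_right, quarterSign]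
  | one =>
    simp [sinRatioPoly, sum_range_succ, sinRatioCoeff_zero_right, sinRatioCoeff_self, quarterSign]
  | more k ih _ => simp [sinRatioPoly_add_two, ih, quarterSign_add_two]

theorem sin_add_cos_nat_mul_pi_div_two (k : ℕ) :
    Real.sin (k * Real.pi / 2) + Real.cos (k * Real.pi / 2) = quarterSign k := by
  induction k using Nat.twoStepInduction with
  | zero => simp [quarterSign]
  | one => simp [quarterSign]
  | more k ih _ =>
    rw [show ((k + 2 : ℕ) : ℝ) * Real.pi / 2 = k * Real.pi / 2 + Real.pi by push_cast; ring,
      Real.sin_add_pi, Real.cos_add_pi, quarterSign_add_two, Rat.cast_neg, ← ih]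
    ring

/-- For odd `n = 2k+1` with `k ≥ 1`,
`f_n(−2) = sin(kπ/2) + cos(kπ/2)`; in particular `f_n(−2) = 1` if `k ≡ 0, 1 (mod 4)` and
`f_n(−2) = −1` if `k ≡ 2, 3 (mod 4)`, so `f_n(−2) = ±1`. -/
theorem fPoly_eval_neg_two (k : ℕ) (hk : 1 ≤ k) :
    (((fPoly (2 * k + 1)).eval (-2) : ℚ) : ℝ) =
        Real.sin (k * Real.pi / 2) + Real.cos (k * Real.pi / 2) ∧
    (k % 4 = 0 ∨ k % 4 = 1 → (fPoly (2 * k + 1)).eval (-2) = 1) ∧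
    (k % 4 = 2 ∨ k % 4 = 3 → (fPoly (2 * k + 1)).eval (-2) = -1) := by
  have hval : (fPoly (2 * k + 1)).eval (-2) = quarterSign k := by
    rw [fPoly_eq_sinRatioPoly hk, sinRatioPoly_eval_neg_two]
  refine ⟨by rw [hval, sin_add_cos_nat_mul_pi_div_two], fun h ↦ ?_, fun h ↦ ?_⟩ <;>
    rw [hval, quarterSign]
  · exact if_pos (by omega)
  · exact if_neg (by omega)
end
end

section
/- For every odd prime p, the polynomial f_p is irreducible in ℚ[X]. -/
noncomputable section

open Polynomial

namespace FPolyAux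

/-- Integer coefficient of `X^j` in `f_{2m+1}`. -/
def a (m j : ℕ) : ℕ := (m + j).choose (2 * j) + 2 * (m + j).choose (2 * j + 1)

lemma key_nat (m j : ℕ) (hj : j ≤ m) :
    (2 * m + 1) * (m + j).factorial =
      a m j * ((2 * j + 1).factorial * (m - j).factorial) := by
  rcases eq_or_lt_of_le hj with rfl | hlt
  · have ha : a j j = 1 := by
      simp [a, ← two_mul, Nat.choose_self, Nat.choose_eq_zero_of_lt (by omega : 2 * j < 2 * j + 1)]
    rw [ha, ← two_mul, Nat.sub_self, Nat.factorial_zero, Nat.factorial_succ]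
    ring
  · obtain ⟨d, hd⟩ : ∃ d, m = j + (d + 1) := ⟨m - j - 1, by omega⟩
    subst hd
    have h1 := Nat.choose_mul_factorial_mul_factorial (show 2 * j ≤ j + (d+1) + j by omega)
    have h2 := Nat.choose_mul_factorial_mul_factorial (show 2 * j + 1 ≤ j + (d+1) + j by omega)
    rw [show j + (d+1) + j - 2 * j = d + 1 from by omega] at h1
    rw [show j + (d+1) + j - (2 * j + 1) = d from by omega] at h2
    rw [show j + (d+1) - j = d + 1 from by omega]
    have hf1 : (2 * j + 1).factorial = (2 * j + 1) * (2 * j).factorial := Nat.factorial_succ _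
    have hf2 : (d + 1).factorial = (d + 1) * d.factorial := Nat.factorial_succ _
    unfold a
    zify at h1 h2 hf1 hf2 ⊢
    set C1 : ℤ := ((j + (d+1) + j).choose (2 * j) : ℤ)
    set C2 : ℤ := ((j + (d+1) + j).choose (2 * j + 1) : ℤ)
    linear_combination (-(2*(j:ℤ)+1)) * h1 - 2*((d:ℤ)+1) * h2 - C1 * ((d+1).factorial : ℤ) * hf1
      - 2 * C2 * (((2*j+1).factorial : ℤ)) * hf2

lemma prod_eq (m j : ℕ) (hj : j ≤ m) :
    (∏ i ∈ Finset.Icc 1 j, ((2 * (m:ℚ) + 1) ^ 2 - (2 * (i:ℚ) - 1) ^ 2)) *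
        ((m - j).factorial : ℚ) = 4 ^ j * ((m + j).factorial : ℚ) := by
  induction j with
  | zero => simp
  | succ j ih =>
    have hj' : j ≤ m := by omega
    obtain ⟨d, hd⟩ : ∃ d, m = j + 1 + d := ⟨m - j - 1, by omega⟩
    rw [Finset.prod_Icc_succ_top (by omega : 1 ≤ j + 1)]
    have ih' := ih hj'
    rw [show m - j = (m - (j+1)) + 1 from by omega, Nat.factorial_succ] at ih'
    rw [show m + (j + 1) = (m + j) + 1 from by omega, Nat.factorial_succ]
    push_cast at ih' ⊢
    rw [show ((m - (j+1) : ℕ) : ℚ) = (m : ℚ) - j - 1 from by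
      rw [Nat.cast_sub (by omega)]; push_cast; ring] at ih'
    linear_combination (4 * ((m:ℚ) + j + 1)) * ih'

lemma coeff_eq (m j : ℕ) (hj : j ≤ m) :
    ((2 * (m:ℚ) + 1) * ∏ i ∈ Finset.Icc 1 j, ((2 * (m:ℚ) + 1) ^ 2 - (2 * (i:ℚ) - 1) ^ 2)) /
        (2 ^ (2 * j) * ((2 * j + 1).factorial : ℚ)) = (a m j : ℚ) := by
  have hfac : ((2 * j + 1).factorial : ℚ) ≠ 0 := Nat.cast_ne_zero.mpr (Nat.factorial_ne_zero _)
  have hfac2 : ((m - j).factorial : ℚ) ≠ 0 := Nat.cast_ne_zero.mpr (Nat.factorial_ne_zero _)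
  rw [div_eq_iff (by positivity)]
  have h1 := prod_eq m j hj
  have h2 := key_nat m j hj
  have h2' : (2 * (m:ℚ) + 1) * ((m + j).factorial : ℚ) =
      (a m j : ℚ) * (((2 * j + 1).factorial : ℚ) * ((m - j).factorial : ℚ)) := by
    exact_mod_cast congrArg (Nat.cast : ℕ → ℚ) h2
  have h4 : (2 : ℚ) ^ (2 * j) = 4 ^ j := by rw [pow_mul]; norm_num
  apply mul_right_cancel₀ hfac2
  calc (2 * (m:ℚ) + 1) * (∏ i ∈ Finset.Icc 1 j, ((2 * (m:ℚ) + 1) ^ 2 - (2 * (i:ℚ) - 1) ^ 2)) *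
        ((m - j).factorial : ℚ)
      = (2 * (m:ℚ) + 1) * (4 ^ j * ((m + j).factorial : ℚ)) := by rw [mul_assoc, h1]
    _ = 4 ^ j * ((a m j : ℚ) * (((2 * j + 1).factorial : ℚ) * ((m - j).factorial : ℚ))) := by
        rw [← h2']; ring
    _ = (a m j : ℚ) * (2 ^ (2 * j) * ((2 * j + 1).factorial : ℚ)) * ((m - j).factorial : ℚ) := by
        rw [h4]; ring

lemma a_zero (m : ℕ) : a m 0 = 2 * m + 1 := by
  simp [a, Nat.choose_one_right]; ring

lemma a_self (m : ℕ) : a m m = 1 := by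
  simp [a, ← two_mul, Nat.choose_self, Nat.choose_eq_zero_of_lt (by omega : 2 * m < 2 * m + 1)]

noncomputable def g (m : ℕ) : ℤ[X] := ∑ j ∈ Finset.range (m + 1), C (a m j : ℤ) * X ^ j

lemma g_coeff (m k : ℕ) : (g m).coeff k = if k ≤ m then (a m k : ℤ) else 0 := by
  rw [g, finset_sum_coeff]
  simp only [coeff_C_mul, coeff_X_pow, mul_ite, mul_one, mul_zero]
  rw [Finset.sum_ite_eq (Finset.range (m + 1)) k fun j => ((a m j : ℤ))]
  simp [Nat.lt_succ_iff]

lemma g_natDegree (m : ℕ) : (g m).natDegree = m := by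
  apply le_antisymm
  · apply Polynomial.natDegree_sum_le_of_forall_le
    intro j hj
    refine le_trans (natDegree_mul_le) ?_
    simp only [natDegree_C, natDegree_X_pow, zero_add]
    exact Nat.lt_succ_iff.mp (Finset.mem_range.mp hj)
  · apply le_natDegree_of_ne_zero
    rw [g_coeff]
    simp [a_self]

lemma g_monic (m : ℕ) : (g m).Monic := by
  unfold Polynomial.Monic
  rw [leadingCoeff, g_natDegree, g_coeff]
  simp [a_self]

lemma g_eisenstein (m : ℕ) (hm : 1 ≤ m) (hp : (2 * m + 1).Prime) :
    (g m).IsEisensteinAt (Ideal.span {((2 * m + 1 : ℕ) : ℤ)}) := by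
  constructor
  · rw [(g_monic m).leadingCoeff, Ideal.mem_span_singleton]
    intro h
    have := Int.le_of_dvd one_pos h
    omega
  · intro n hn
    rw [g_natDegree] at hn
    rw [g_coeff, if_pos (le_of_lt hn), Ideal.mem_span_singleton]
    rw [Int.natCast_dvd_natCast]
    have h2 := key_nat m n (le_of_lt hn)
    have hdvd : (2 * m + 1) ∣ a m n * ((2 * n + 1).factorial * (m - n).factorial) :=
      ⟨(m + n).factorial, h2.symm⟩
    rcases (Nat.Prime.dvd_mul hp).mp hdvd with h | h
    · exact h
    · exfalso
      rcases (Nat.Prime.dvd_mul hp).mp h with h' | h'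
      · rw [Nat.Prime.dvd_factorial hp] at h'; omega
      · rw [Nat.Prime.dvd_factorial hp] at h'; omega
  · rw [g_coeff, if_pos (Nat.zero_le m), a_zero, Ideal.span_singleton_pow,
      Ideal.mem_span_singleton]
    intro h
    rw [← Nat.cast_pow, Int.natCast_dvd_natCast] at h
    have := Nat.le_of_dvd (by omega) h
    nlinarith


lemma map_g (m : ℕ) (hm : 1 ≤ m) : (g m).map (Int.castRingHom ℚ) = fPoly (2 * m + 1) := by
  rw [g, Polynomial.map_sum]
  simp only [Polynomial.map_mul, Polynomial.map_pow, Polynomial.map_X, Polynomial.map_C,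
    map_natCast, Polynomial.map_natCast]
  rw [fPoly, show (2 * m + 1 - 3) / 2 = m - 1 from by omega,
    show (2 * m + 1 - 1) / 2 = m from by omega]
  have hset : Finset.range (m + 1) = insert 0 (insert m (Finset.Icc 1 (m - 1))) := by
    ext x; simp only [Finset.mem_range, Finset.mem_insert, Finset.mem_Icc]; omega
  rw [hset, Finset.sum_insert (by simp only [Finset.mem_insert, Finset.mem_Icc]; omega),
    Finset.sum_insert (by simp only [Finset.mem_Icc]; omega)]
  have h0 : ((a m 0 : ℕ) : ℚ[X]) * X ^ 0 = C (((2 * m + 1 : ℕ) : ℚ)) := by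
    rw [a_zero, pow_zero, mul_one, Polynomial.C_eq_natCast]
  have hmm : ((a m m : ℕ) : ℚ[X]) * X ^ m = X ^ m := by
    rw [a_self]; simp
  rw [h0, hmm]
  have hsum : ∑ j ∈ Finset.Icc 1 (m - 1), ((a m j : ℕ) : ℚ[X]) * X ^ j =
      ∑ j ∈ Finset.Icc 1 (m - 1),
        C ((((2 * m + 1 : ℕ) : ℚ) *
            ∏ i ∈ Finset.Icc 1 j, (((2 * m + 1 : ℕ) : ℚ) ^ 2 - (2 * (i : ℚ) - 1) ^ 2)) /
          (2 ^ (2 * j) * ((2 * j + 1).factorial : ℚ))) * X ^ j := by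
    refine Finset.sum_congr rfl fun j hj => ?_
    have hj' : j ≤ m := by
      have := (Finset.mem_Icc.mp hj).2; omega
    rw [show ((2 * m + 1 : ℕ) : ℚ) = 2 * (m : ℚ) + 1 from by push_cast; ring,
      coeff_eq m j hj', Polynomial.C_eq_natCast]
  rw [hsum]
  ring

end FPolyAux

open FPolyAux in
/-- For every odd prime `p`, the polynomial `f_p` is irreducible in `ℚ[X]`. -/
theorem fPoly_irreducible (p : ℕ) (hp : p.Prime) (hodd : Odd p) :
    Irreducible (fPoly p) := by
  obtain ⟨m, rfl⟩ := hodd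
  have hm : 1 ≤ m := by have := hp.two_le; omega
  have hpZ : Prime ((2 * m + 1 : ℕ) : ℤ) := Nat.prime_iff_prime_int.mp hp
  have hprime : (Ideal.span {((2 * m + 1 : ℕ) : ℤ)}).IsPrime :=
    (Ideal.span_singleton_prime (by exact_mod_cast (by omega : (2 * m + 1 : ℕ) ≠ 0))).mpr hpZ
  have hIrrZ : Irreducible (g m) :=
    (g_eisenstein m hm hp).irreducible hprime (g_monic m).isPrimitive
      (by rw [g_natDegree]; omega)
  have h := (Polynomial.IsPrimitive.Int.irreducible_iff_irreducible_map_cast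
    (g_monic m).isPrimitive).mp hIrrZ
  rwa [map_g m hm] at h
end
end

section
/- For all integers i ≥ 1 and 1 ≤ j ≤ i, the binomial coefficient C(2j−1, j) divides the product C(i, j)·C(i+j−1, j); in particular every coefficient of the polynomial ψ^i is an integer. -/
noncomputable section

open Polynomial

lemma key_aux (k b : ℕ) :
    ((k+b+2).choose (k+1)) * ((2*k+b+2).choose (k+1)) =
    (2*k+1).choose (k+1) * ((2*k+b+2).choose (2*k+1) + 2 * (2*k+b+2).choose (2*k+2)) := by
  have hQ : (((k+b+2).choose (k+1) : ℚ)) * ((2*k+b+2).choose (k+1) : ℚ) =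
      ((2*k+1).choose (k+1) : ℚ) *
        (((2*k+b+2).choose (2*k+1) : ℚ) + 2 * ((2*k+b+2).choose (2*k+2) : ℚ)) := by
    rw [Nat.cast_choose ℚ (show k+1 ≤ k+b+2 by omega),
        Nat.cast_choose ℚ (show k+1 ≤ 2*k+b+2 by omega),
        Nat.cast_choose ℚ (show k+1 ≤ 2*k+1 by omega),
        Nat.cast_choose ℚ (show 2*k+1 ≤ 2*k+b+2 by omega),
        Nat.cast_choose ℚ (show 2*k+2 ≤ 2*k+b+2 by omega)]
    have e1 : k+b+2-(k+1) = b+1 := by omega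
    have e2 : 2*k+b+2-(k+1) = k+b+1 := by omega
    have e3 : 2*k+1-(k+1) = k := by omega
    have e4 : 2*k+b+2-(2*k+1) = b+1 := by omega
    have e5 : 2*k+b+2-(2*k+2) = b := by omega
    rw [e1, e2, e3, e4, e5]
    have f1 : (k+b+2).factorial = (k+b+2) * (k+b+1).factorial := rfl
    have f2 : (k+1).factorial = (k+1) * k.factorial := rfl
    have f3 : (b+1).factorial = (b+1) * b.factorial := rfl
    have f4 : (2*k+b+2).factorial = (2*k+b+2) * (2*k+b+1).factorial := rfl
    have f5 : (2*k+2).factorial = (2*k+2) * (2*k+1).factorial := rfl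
    rw [f1, f2, f3, f4, f5]
    have n1 : (k.factorial : ℚ) ≠ 0 := by exact_mod_cast k.factorial_ne_zero
    have n2 : (b.factorial : ℚ) ≠ 0 := by exact_mod_cast b.factorial_ne_zero
    have n3 : ((k+b+1).factorial : ℚ) ≠ 0 := by exact_mod_cast (k+b+1).factorial_ne_zero
    have n4 : ((2*k+1).factorial : ℚ) ≠ 0 := by exact_mod_cast (2*k+1).factorial_ne_zero
    have n5 : ((2*k+b+1).factorial : ℚ) ≠ 0 := by exact_mod_cast (2*k+b+1).factorial_ne_zero
    push_cast
    field_simp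
    ring
  exact_mod_cast hQ

lemma dvd_part (i : ℕ) : ∀ j : ℕ, 1 ≤ j → j ≤ i →
    (2 * j - 1).choose j ∣ i.choose j * (i + j - 1).choose j := by
  intro j hj hji
  obtain ⟨k, rfl⟩ : ∃ k, j = k + 1 := ⟨j - 1, by omega⟩
  rcases Nat.lt_or_ge i (k + 2) with h | h
  · -- i = j = k+1
    have : i = k + 1 := by omega
    subst this
    have e1 : 2*(k+1)-1 = 2*k+1 := by omega
    have e2 : (k+1)+(k+1)-1 = 2*k+1 := by omega
    rw [e1, e2, Nat.choose_self, one_mul]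
  · obtain ⟨b, rfl⟩ : ∃ b, i = k + b + 2 := ⟨i - k - 2, by omega⟩
    have e1 : 2*(k+1)-1 = 2*k+1 := by omega
    have e2 : (k+b+2)+(k+1)-1 = 2*k+b+2 := by omega
    rw [e1, e2]
    exact ⟨(2*k+b+2).choose (2*k+1) + 2 * (2*k+b+2).choose (2*k+2), key_aux k b⟩


/-- For all `i ≥ 1` and `1 ≤ j ≤ i`, `C(2j−1, j)` divides
`C(i, j)·C(i+j−1, j)`; in particular every coefficient of `ψ^i` is an integer. -/
theorem choose_dvd_choose_mul_choose (i : ℕ) (hi : 1 ≤ i) :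
    (∀ j : ℕ, 1 ≤ j → j ≤ i →
      (2 * j - 1).choose j ∣ i.choose j * (i + j - 1).choose j) ∧
    (∀ m : ℕ, ∃ z : ℤ, (psiPoly i).coeff m = (z : ℚ)) := by
  refine ⟨dvd_part i, ?_⟩
  intro m
  have hcoeff : (psiPoly i).coeff m =
      if m ∈ Finset.Icc 1 i then
        ((i.choose m : ℚ) * ((i + m - 1).choose m : ℚ)) / ((2 * m - 1).choose m : ℚ)
      else 0 := by
    rw [psiPoly, Polynomial.finset_sum_coeff]
    simp [Polynomial.coeff_C_mul, Polynomial.coeff_X_pow, Finset.sum_ite_eq']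
  by_cases hm : m ∈ Finset.Icc 1 i
  · obtain ⟨h1, h2⟩ := Finset.mem_Icc.mp hm
    obtain ⟨z, hz⟩ := dvd_part i m h1 h2
    refine ⟨z, ?_⟩
    have hne : ((2*m-1).choose m : ℚ) ≠ 0 := by
      have : 0 < (2*m-1).choose m := Nat.choose_pos (by omega)
      exact_mod_cast this.ne'
    have hzQ : (i.choose m : ℚ) * ((i+m-1).choose m : ℚ)
        = ((2*m-1).choose m : ℚ) * (z : ℚ) := by exact_mod_cast hz
    rw [hcoeff, if_pos hm, hzQ, mul_comm, mul_div_assoc, div_self hne, mul_one]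
    push_cast
    ring
  · exact ⟨0, by rw [hcoeff, if_neg hm]; simp⟩
end
end

section
/- For every odd n ≥ 5 and every integer j with 1 ≤ j ≤ (n−3)/2, the integer 2^{2j}·(2j+1)! divides the product n·(n²−1²)·(n²−3²)⋯(n²−(2j−1)²) = n·∏_{i=1}^{j}(n²−(2i−1)²); in particular every coefficient of the polynomial f_n is an integer. -/
noncomputable section

open Polynomial

/-!
Write `n = 2m + 1`. Each factor `n² − (2i−1)²` equals `4(m+1−i)(m+i)`, so the product is
`4^j · (m+j)!/(m−j)! = 4^j · (2j)! · C(m+j, 2j)`, and the missing factor `2j + 1` comes from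
`(2m+1) · C(m+j, 2j) = (2j+1) · (C(m+j+1, 2j+1) + C(m+j, 2j+1))`.
Each coefficient of `f_n` is then an integer divided by one of its divisors.
-/

theorem prod_sq_sub_odd_sq_eq_descFactorial (m j : ℕ) (hj : j ≤ m) :
    ∏ i ∈ Finset.Icc 1 j, ((2 * m + 1 : ℤ) ^ 2 - (2 * (i : ℤ) - 1) ^ 2) =
      4 ^ j * ((m + j).descFactorial (2 * j) : ℤ) := by
  induction j with
  | zero => simp
  | succ j ih =>
    rw [Finset.prod_Icc_succ_top (by omega), ih (by omega),
      show m + (j + 1) = m + j + 1 by omega, show 2 * (j + 1) = 2 * j + 1 + 1 by omega,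
      Nat.succ_descFactorial_succ, Nat.descFactorial_succ,
      show m + j - 2 * j = m - j by omega]
    push_cast [show j ≤ m by omega]
    ring

theorem two_mul_add_one_mul_choose (m j : ℕ) (hj : j ≤ m) :
    (2 * m + 1) * (m + j).choose (2 * j) =
      (2 * j + 1) * ((m + j + 1).choose (2 * j + 1) + (m + j).choose (2 * j + 1)) := by
  have h₁ := Nat.add_one_mul_choose_eq (m + j) (2 * j)
  have h₂ := Nat.choose_succ_right_eq (m + j) (2 * j)
  rw [show m + j - 2 * j = m - j by omega] at h₂
  rw [show 2 * m + 1 = (m + j + 1) + (m - j) by omega]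
  linear_combination h₁ + h₂.symm

theorem odd_mul_prod_sq_sub_odd_sq_eq (m j : ℕ) (hj : j ≤ m) :
    (2 * m + 1 : ℤ) * ∏ i ∈ Finset.Icc 1 j, ((2 * m + 1 : ℤ) ^ 2 - (2 * (i : ℤ) - 1) ^ 2) =
      2 ^ (2 * j) * (2 * j + 1).factorial *
        ((m + j + 1).choose (2 * j + 1) + (m + j).choose (2 * j + 1) : ℕ) := by
  have h := congrArg (Nat.cast : ℕ → ℤ) (two_mul_add_one_mul_choose m j hj)
  push_cast at h
  rw [prod_sq_sub_odd_sq_eq_descFactorial m j hj, Nat.descFactorial_eq_factorial_mul_choose,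
    Nat.factorial_succ, pow_mul]
  push_cast
  linear_combination (4 ^ j * ((2 * j).factorial : ℤ)) * h

theorem C_intCast_div_mem_lifts {a b : ℤ} (h : b ∣ a) :
    C ((a : ℚ) / b) ∈ lifts (Int.castRingHom ℚ) := by
  obtain rfl | hb := eq_or_ne b 0
  · simp
  · rw [← Int.cast_div h (by exact_mod_cast hb)]
    exact C_mem_lifts _ _

theorem dvd_prod_fPoly_coeff_int_general (n : ℕ) (hodd : Odd n) :
    (∀ j : ℕ, 1 ≤ j → j ≤ (n - 3) / 2 →
      ((2 : ℤ) ^ (2 * j) * ((2 * j + 1).factorial : ℤ)) ∣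
        (n : ℤ) * ∏ i ∈ Finset.Icc 1 j, ((n : ℤ) ^ 2 - (2 * (i : ℤ) - 1) ^ 2)) ∧
    (∀ m : ℕ, ∃ z : ℤ, (fPoly n).coeff m = (z : ℚ)) := by
  obtain ⟨m, rfl⟩ := hodd
  have hdvd : ∀ j, j ≤ (2 * m + 1 - 3) / 2 →
      ((2 : ℤ) ^ (2 * j) * ((2 * j + 1).factorial : ℤ)) ∣
        ((2 * m + 1 : ℕ) : ℤ) * ∏ i ∈ Finset.Icc 1 j,
          (((2 * m + 1 : ℕ) : ℤ) ^ 2 - (2 * (i : ℤ) - 1) ^ 2) := fun j hj => by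
    push_cast
    exact Dvd.intro _ (odd_mul_prod_sq_sub_odd_sq_eq m j (by omega)).symm
  refine ⟨fun j _ => hdvd j, fun k => ?_⟩
  have hlifts : fPoly (2 * m + 1) ∈ lifts (Int.castRingHom ℚ) := by
    refine add_mem (add_mem ?_ (sum_mem fun j hj => mul_mem ?_ (X_pow_mem_lifts _ _)))
      (X_pow_mem_lifts _ _)
    · exact_mod_cast C_mem_lifts (Int.castRingHom ℚ) (2 * m + 1)
    · exact_mod_cast C_intCast_div_mem_lifts (hdvd j (Finset.mem_Icc.1 hj).2)
  obtain ⟨z, hz⟩ := (lifts_iff_coeff_lifts _).1 hlifts k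
  exact ⟨z, hz.symm⟩

/-- For every odd `n ≥ 5` and every `1 ≤ j ≤ (n−3)/2`, the integer
`2^{2j}·(2j+1)!` divides `n·∏_{i=1}^{j}(n²−(2i−1)²)`; in particular every coefficient of
`f_n` is an integer. -/
theorem dvd_prod_fPoly_coeff_int (n : ℕ) (hodd : Odd n) (hn : 5 ≤ n) :
    (∀ j : ℕ, 1 ≤ j → j ≤ (n - 3) / 2 →
      ((2 : ℤ) ^ (2 * j) * ((2 * j + 1).factorial : ℤ)) ∣
        (n : ℤ) * ∏ i ∈ Finset.Icc 1 j, ((n : ℤ) ^ 2 - (2 * (i : ℤ) - 1) ^ 2)) ∧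
    (∀ m : ℕ, ∃ z : ℤ, (fPoly n).coeff m = (z : ℚ)) :=
  dvd_prod_fPoly_coeff_int_general n hodd
end
end
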